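/- arXiv:2509.26040 — 4 statements merged into one kernel-verified Lean document; each statement's English description precedes it below -/
import Mathlib

section
/- Let Q be a Borel probability measure on (0,∞) such that ∫_{(0,∞)} (log x)₊ dQ(x) < ∞ and ∫_{(0,∞)} (log x)₋ dQ(x) = ∞. Then L*(Q) := sup_{g ∈ 𝒢_Q} L(g,Q) = ∞; that is, for every M ∈ ℝ there exists g ∈ 𝒢 such that L(g,Q) is well-defined and L(g,Q) > M. -/
open MeasureTheory Set Real Filter Topology
open scoped ENNReal NNReal

noncomputable section

/-- The nonnegative part of an extended real, as an extended nonnegative real. -/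
def ePos (x : EReal) : ℝ≥0∞ := if x = ⊤ then ⊤ else ENNReal.ofReal x.toReal

/-- `log (g x)` with the convention `log 0 = -∞`, as an extended real. -/
def elog (t : ℝ) : EReal := ENNReal.log (ENNReal.ofReal t)

/-- positive part `∫ (log g)₊ dQ` over `(0,∞)`. -/
def logPosPart (g : ℝ → ℝ) (Q : Measure ℝ) : ℝ≥0∞ :=
  ∫⁻ x in Set.Ioi 0, ePos (elog (g x)) ∂Q

def logNegPart (g : ℝ → ℝ) (Q : Measure ℝ) : ℝ≥0∞ :=
  ∫⁻ x in Set.Ioi 0, ePos (-(elog (g x))) ∂Q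

/-- the log-likelihood functional `L(g,Q) = ∫_{(0,∞)} log g dQ`, as an extended real. -/
def LL (g : ℝ → ℝ) (Q : Measure ℝ) : EReal :=
  (logPosPart g Q : EReal) - (logNegPart g Q : EReal)

/-- the class `𝒢` of left-continuous decreasing densities on `(0,∞)`. -/
def IsDecDensity (g : ℝ → ℝ) : Prop :=
  (∀ x ∈ Set.Ioi (0:ℝ), 0 ≤ g x) ∧
  AntitoneOn g (Set.Ioi 0) ∧
  (∀ x ∈ Set.Ioi (0:ℝ), ContinuousWithinAt g (Set.Iio x) x) ∧
  (∫ x in Set.Ioi (0:ℝ), g x) = 1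

/-! ### auxiliary lemmas -/

lemma ePos_elog_pos {t : ℝ} (ht : 0 < t) : ePos (elog t) = ENNReal.ofReal (Real.log t) := by
  rw [elog, ENNReal.log_ofReal_of_pos ht, ePos, if_neg (EReal.coe_ne_top _)]
  simp

lemma ePos_neg_elog_pos {t : ℝ} (ht : 0 < t) : ePos (-(elog t)) = ENNReal.ofReal (-Real.log t) := by
  rw [elog, ENNReal.log_ofReal_of_pos ht, ← EReal.coe_neg, ePos, if_neg (EReal.coe_ne_top _)]
  simp

lemma top_sub_ennreal {b : ℝ≥0∞} (hb : b ≠ ⊤) : (⊤ : EReal) - (b : EReal) = ⊤ := by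
  lift b to ℝ≥0 using hb
  have : ((b : ℝ≥0∞) : EReal) = ((b : ℝ) : EReal) := by norm_cast
  rw [this]
  exact EReal.top_sub_coe _

/-- the witness density: `x^{-1/2}/3` on `(0,1]`, `x^{-2}/3` on `(1,∞)`. -/
def gg (x : ℝ) : ℝ := if x ≤ 1 then (1/3) * x ^ (-(1/2) : ℝ) else (1/3) * x ^ (-2 : ℝ)

lemma gg_pos {x : ℝ} (hx : 0 < x) : 0 < gg x := by
  unfold gg; split <;> positivity

lemma gg_anti : AntitoneOn gg (Set.Ioi 0) := by
  intro a ha b hb hab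
  simp only [mem_Ioi] at ha hb
  unfold gg
  rcases le_or_gt b 1 with hb1 | hb1
  · rw [if_pos hb1, if_pos (hab.trans hb1)]
    exact mul_le_mul_of_nonneg_left (Real.rpow_le_rpow_of_nonpos ha hab (by norm_num)) (by norm_num)
  · rw [if_neg hb1.not_ge]
    rcases le_or_gt a 1 with ha1 | ha1
    · rw [if_pos ha1]
      have h1 : b ^ (-2 : ℝ) ≤ 1 := by
        calc b ^ (-2:ℝ) ≤ (1:ℝ) ^ (-2:ℝ) :=
          Real.rpow_le_rpow_of_nonpos one_pos hb1.le (by norm_num)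
        _ = 1 := by simp
      have h2 : (1:ℝ) ≤ a ^ (-(1/2) : ℝ) := by
        calc (1:ℝ) = (1:ℝ) ^ (-(1/2):ℝ) := by simp
        _ ≤ a ^ (-(1/2):ℝ) := Real.rpow_le_rpow_of_nonpos ha ha1 (by norm_num)
      nlinarith
    · rw [if_neg ha1.not_ge]
      exact mul_le_mul_of_nonneg_left (Real.rpow_le_rpow_of_nonpos ha hab (by norm_num)) (by norm_num)

lemma gg_cont {x : ℝ} (hx : 0 < x) : ContinuousWithinAt gg (Set.Iio x) x := by
  rcases le_or_gt x 1 with hx1 | hx1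
  · have hc : ContinuousWithinAt (fun y : ℝ => (1/3) * y ^ (-(1/2) : ℝ)) (Set.Iio x) x :=
      (continuousAt_const.mul (Real.continuousAt_rpow_const x _ (Or.inl hx.ne'))).continuousWithinAt
    refine hc.congr (fun y hy => ?_) ?_
    · simp only [gg, if_pos (le_of_lt (lt_of_lt_of_le hy hx1))]
    · simp only [gg, if_pos hx1]
  · have hc : ContinuousWithinAt (fun y : ℝ => (1/3) * y ^ (-2 : ℝ)) (Set.Iio x) x :=
      (continuousAt_const.mul (Real.continuousAt_rpow_const x _ (Or.inl hx.ne'))).continuousWithinAt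
    refine hc.congr_of_eventuallyEq ?_ ?_
    · filter_upwards [eventually_nhdsWithin_of_eventually_nhds
        (eventually_gt_nhds hx1)] with y hy
      simp [gg, hy.not_ge]
    · simp [gg, hx1.not_ge]

lemma gg_int : (∫ x in Set.Ioi (0:ℝ), gg x) = 1 := by
  have hsplit : Set.Ioi (0:ℝ) = Set.Ioc 0 1 ∪ Set.Ioi 1 := (Set.Ioc_union_Ioi_eq_Ioi zero_le_one).symm
  have hd : Disjoint (Set.Ioc (0:ℝ) 1) (Set.Ioi 1) := Set.Ioc_disjoint_Ioi le_rfl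
  have h1 : (∫ x in Set.Ioc (0:ℝ) 1, gg x) = 2/3 := by
    have : (∫ x in Set.Ioc (0:ℝ) 1, gg x) = ∫ x in Set.Ioc (0:ℝ) 1, (1/3) * x ^ (-(1/2) : ℝ) := by
      refine setIntegral_congr_fun measurableSet_Ioc (fun y hy => ?_)
      simp [gg, hy.2]
    rw [this, ← intervalIntegral.integral_of_le zero_le_one, intervalIntegral.integral_const_mul,
      integral_rpow (Or.inl (by norm_num))]
    rw [Real.zero_rpow (by norm_num), Real.one_rpow]
    norm_num
  have h2 : (∫ x in Set.Ioi (1:ℝ), gg x) = 1/3 := by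
    have : (∫ x in Set.Ioi (1:ℝ), gg x) = ∫ x in Set.Ioi (1:ℝ), (1/3) * x ^ (-2 : ℝ) := by
      refine setIntegral_congr_fun measurableSet_Ioi (fun y hy => ?_)
      simp [gg, (not_le.mpr (mem_Ioi.mp hy))]
    rw [this, integral_const_mul, integral_Ioi_rpow_of_lt (by norm_num) one_pos]
    norm_num
  have hi1 : IntegrableOn gg (Set.Ioc (0:ℝ) 1) := by
    have hbase : IntegrableOn (fun x : ℝ => (1/3) * x ^ (-(1/2):ℝ)) (Set.Ioc (0:ℝ) 1) := by
      have := ((intervalIntegral.intervalIntegrable_rpow' (a := 0) (b := 1)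
        (by norm_num : (-1:ℝ) < -(1/2))).const_mul (1/3))
      rw [intervalIntegrable_iff, Set.uIoc_of_le zero_le_one] at this
      exact this
    exact hbase.congr_fun (fun y hy => by simp [gg, hy.2]) measurableSet_Ioc
  have hi2 : IntegrableOn gg (Set.Ioi (1:ℝ)) := by
    have hbase : IntegrableOn (fun x : ℝ => (1/3) * x ^ (-2:ℝ)) (Set.Ioi (1:ℝ)) :=
      (integrableOn_Ioi_rpow_of_lt (by norm_num) one_pos).const_mul (1/3)
    exact hbase.congr_fun (fun y hy => by simp [gg, (not_le.mpr (mem_Ioi.mp hy))]) measurableSet_Ioi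
  rw [hsplit, setIntegral_union hd measurableSet_Ioi hi1 hi2, h1, h2]
  norm_num

lemma gg_log {x : ℝ} (hx : 0 < x) :
    Real.log (gg x) = if x ≤ 1 then -Real.log 3 - (1/2) * Real.log x
      else -Real.log 3 - 2 * Real.log x := by
  unfold gg
  split
  · rw [Real.log_mul (by norm_num) (by positivity), Real.log_rpow hx]
    rw [show (1:ℝ)/3 = 3⁻¹ by norm_num, Real.log_inv]
    ring
  · rw [Real.log_mul (by norm_num) (by positivity), Real.log_rpow hx]
    rw [show (1:ℝ)/3 = 3⁻¹ by norm_num, Real.log_inv]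
    ring

theorem stmt1 (Q : Measure ℝ) [IsProbabilityMeasure Q] (hQ : Q (Set.Ioi 0) = 1)
    (hpos : (∫⁻ x in Set.Ioi 0, ENNReal.ofReal (Real.log x) ∂Q) ≠ ⊤)
    (hneg : (∫⁻ x in Set.Ioi 0, ENNReal.ofReal (-Real.log x) ∂Q) = ⊤) :
    ∀ M : ℝ, ∃ g : ℝ → ℝ, IsDecDensity g ∧
      (logPosPart g Q ≠ ⊤ ∨ logNegPart g Q ≠ ⊤) ∧ (M : EReal) < LL g Q := by
  intro M
  have hlog3 : (0:ℝ) ≤ Real.log 3 := Real.log_nonneg (by norm_num)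
  -- the negative part is finite
  have hNeg : logNegPart gg Q ≠ ⊤ := by
    have hb : logNegPart gg Q ≤
        ENNReal.ofReal (Real.log 3) * Q (Set.Ioi 0)
          + 2 * ∫⁻ x in Set.Ioi 0, ENNReal.ofReal (Real.log x) ∂Q := by
      calc logNegPart gg Q
          ≤ ∫⁻ x in Set.Ioi 0,
              (ENNReal.ofReal (Real.log 3) + 2 * ENNReal.ofReal (Real.log x)) ∂Q := by
            refine setLIntegral_mono' measurableSet_Ioi (fun x hx => ?_)
            have hx0 : (0:ℝ) < x := hx
            rw [ePos_neg_elog_pos (gg_pos hx0), gg_log hx0]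
            rcases le_or_gt x 1 with hx1 | hx1
            · rw [if_pos hx1]
              have : -(-Real.log 3 - 1/2 * Real.log x) ≤ Real.log 3 := by
                have := Real.log_nonpos hx0.le hx1
                linarith
              exact le_add_right (ENNReal.ofReal_le_ofReal this)
            · rw [if_neg hx1.not_ge]
              have hlx : (0:ℝ) ≤ Real.log x := Real.log_nonneg hx1.le
              have : -(-Real.log 3 - 2 * Real.log x) = Real.log 3 + 2 * Real.log x := by ring
              rw [this, ENNReal.ofReal_add hlog3 (by positivity),
                ENNReal.ofReal_mul (by norm_num : (0:ℝ) ≤ 2)]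
              simp
        _ = ENNReal.ofReal (Real.log 3) * Q (Set.Ioi 0)
            + 2 * ∫⁻ x in Set.Ioi 0, ENNReal.ofReal (Real.log x) ∂Q := by
          rw [lintegral_add_left measurable_const, setLIntegral_const,
            lintegral_const_mul' 2 _ ENNReal.ofNat_ne_top]
    intro htop
    rw [htop, top_le_iff] at hb
    exact (ENNReal.add_ne_top.2 ⟨ENNReal.mul_ne_top ENNReal.ofReal_ne_top
      (by rw [hQ]; exact ENNReal.one_ne_top), ENNReal.mul_ne_top ENNReal.ofNat_ne_top hpos⟩) hb
  -- the positive part is infinite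
  have hPos : logPosPart gg Q = ⊤ := by
    have key : (∫⁻ x in Set.Ioi 0, ENNReal.ofReal (-Real.log x) ∂Q) ≤
        2 * logPosPart gg Q + ENNReal.ofReal (2 * Real.log 3) * Q (Set.Ioi 0) := by
      calc (∫⁻ x in Set.Ioi 0, ENNReal.ofReal (-Real.log x) ∂Q)
          ≤ ∫⁻ x in Set.Ioi 0,
              (2 * ePos (elog (gg x)) + ENNReal.ofReal (2 * Real.log 3)) ∂Q := by
            refine setLIntegral_mono' measurableSet_Ioi (fun x hx => ?_)
            have hx0 : (0:ℝ) < x := hx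
            rw [ePos_elog_pos (gg_pos hx0), gg_log hx0]
            rcases le_or_gt x 1 with hx1 | hx1
            · rw [if_pos hx1]
              have hid : -Real.log x
                  = 2 * (-Real.log 3 - 1/2 * Real.log x) + 2 * Real.log 3 := by ring
              calc ENNReal.ofReal (-Real.log x)
                  = ENNReal.ofReal (2 * (-Real.log 3 - 1/2 * Real.log x) + 2 * Real.log 3) := by
                    rw [hid]
                _ ≤ ENNReal.ofReal (2 * (-Real.log 3 - 1/2 * Real.log x))
                      + ENNReal.ofReal (2 * Real.log 3) := ENNReal.ofReal_add_le
                _ ≤ 2 * ENNReal.ofReal (-Real.log 3 - 1/2 * Real.log x)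
                      + ENNReal.ofReal (2 * Real.log 3) := by
                    rw [ENNReal.ofReal_mul (by norm_num : (0:ℝ) ≤ 2)]
                    simp
            · rw [if_neg hx1.not_ge]
              have : ENNReal.ofReal (-Real.log x) = 0 := by
                rw [ENNReal.ofReal_eq_zero]
                have := Real.log_nonneg hx1.le
                linarith
              rw [this]
              exact zero_le
        _ = 2 * logPosPart gg Q + ENNReal.ofReal (2 * Real.log 3) * Q (Set.Ioi 0) := by
          rw [lintegral_add_right _ measurable_const, setLIntegral_const,
            lintegral_const_mul' 2 _ ENNReal.ofNat_ne_top]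
          rfl
    rw [hneg, top_le_iff] at key
    by_contra h
    exact (ENNReal.add_ne_top.2 ⟨ENNReal.mul_ne_top ENNReal.ofNat_ne_top h,
      ENNReal.mul_ne_top ENNReal.ofReal_ne_top (by rw [hQ]; exact ENNReal.one_ne_top)⟩) key
  refine ⟨gg, ⟨fun x hx => (gg_pos hx).le, gg_anti, fun x hx => gg_cont hx, gg_int⟩,
    Or.inr hNeg, ?_⟩
  rw [LL, hPos, EReal.coe_ennreal_top, top_sub_ennreal hNeg]
  exact EReal.coe_lt_top M
end
end

section
/- Let G₁ and G₂ be two distribution functions on (0,∞) (i.e., nondecreasing right-continuous functions with limit 0 at 0 and limit 1 at ∞), and let G₁* and G₂* be their respective least concave majorants on (0,∞). Then sup_{x ∈ (0,∞)} |G₁*(x) − G₂*(x)| ≤ sup_{x ∈ (0,∞)} |G₁(x) − G₂(x)| (Marshall's lemma). -/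
open MeasureTheory Set Real Filter Topology
open scoped ENNReal NNReal

noncomputable section

/-- a distribution function on `(0,∞)`: nondecreasing, right-continuous,
with limit `0` at `0` and limit `1` at `∞`. -/
def IsDistFun (G : ℝ → ℝ) : Prop :=
  MonotoneOn G (Set.Ioi 0) ∧
  (∀ x ∈ Set.Ioi (0:ℝ), ContinuousWithinAt G (Set.Ici x) x) ∧
  Filter.Tendsto G (nhdsWithin 0 (Set.Ioi 0)) (nhds 0) ∧
  Filter.Tendsto G Filter.atTop (nhds 1)

/-- least concave majorant on `(0,∞)`: the pointwise infimum of all concave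
functions on `(0,∞)` dominating `G` there. -/
def lcMajorant (G : ℝ → ℝ) (x : ℝ) : ℝ :=
  sInf {y | ∃ h : ℝ → ℝ, ConcaveOn ℝ (Set.Ioi 0) h ∧ (∀ z ∈ Set.Ioi (0:ℝ), G z ≤ h z) ∧ h x = y}

lemma distFun_le_one (G : ℝ → ℝ) (hG : IsDistFun G) :
    ∀ z ∈ Set.Ioi (0:ℝ), G z ≤ 1 := by
  intro z hz
  refine ge_of_tendsto hG.2.2.2 ?_
  filter_upwards [Filter.eventually_ge_atTop z] with w hw
  exact hG.1 hz (lt_of_lt_of_le hz hw) hw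

lemma lc_le (G₁ G₂ : ℝ → ℝ) (d : ℝ)
    (hle : ∀ z ∈ Set.Ioi (0:ℝ), G₁ z ≤ G₂ z + d)
    (hG2 : ∀ z ∈ Set.Ioi (0:ℝ), G₂ z ≤ 1)
    (x : ℝ) (hx : x ∈ Set.Ioi (0:ℝ)) :
    lcMajorant G₁ x ≤ lcMajorant G₂ x + d := by
  have hbdd : BddBelow {y | ∃ h : ℝ → ℝ, ConcaveOn ℝ (Set.Ioi 0) h ∧
      (∀ z ∈ Set.Ioi (0:ℝ), G₁ z ≤ h z) ∧ h x = y} := by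
    refine ⟨G₁ x, ?_⟩
    rintro y ⟨h, _, hmaj, rfl⟩
    exact hmaj x hx
  have hne₂ : Set.Nonempty {y | ∃ h : ℝ → ℝ, ConcaveOn ℝ (Set.Ioi 0) h ∧
      (∀ z ∈ Set.Ioi (0:ℝ), G₂ z ≤ h z) ∧ h x = y} :=
    ⟨1, fun _ => 1, concaveOn_const 1 (convex_Ioi 0), hG2, rfl⟩
  rw [lcMajorant, lcMajorant, ← sub_le_iff_le_add]
  apply le_csInf hne₂
  rintro y ⟨h, hconc, hmaj, rfl⟩
  rw [sub_le_iff_le_add]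
  apply csInf_le hbdd
  exact ⟨fun z => h z + d, hconc.add (concaveOn_const d (convex_Ioi 0)),
    fun z hz => le_trans (hle z hz) (add_le_add_left (hmaj z hz) d), rfl⟩

/-- Marshall's lemma: `‖G₁* − G₂*‖_∞ ≤ ‖G₁ − G₂‖_∞` on `(0,∞)`. -/
theorem stmt3 (G₁ G₂ : ℝ → ℝ) (h₁ : IsDistFun G₁) (h₂ : IsDistFun G₂) :
    ∀ d : ℝ, (∀ y ∈ Set.Ioi (0:ℝ), |G₁ y - G₂ y| ≤ d) →
      ∀ x ∈ Set.Ioi (0:ℝ), |lcMajorant G₁ x - lcMajorant G₂ x| ≤ d := by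
  intro d hd x hx
  have A := lc_le G₁ G₂ d
    (fun z hz => by linarith [(abs_le.mp (hd z hz)).2])
    (distFun_le_one G₂ h₂) x hx
  have B := lc_le G₂ G₁ d
    (fun z hz => by linarith [(abs_le.mp (hd z hz)).1])
    (distFun_le_one G₁ h₁) x hx
  rw [abs_sub_le_iff]
  constructor <;> linarith

end
end

section
/- Let d = d₁ + d₂ with d₁, d₂ ∈ ℕ, and let f : ℝ^{d₁} × ℝ^{d₂} → [0,∞) be a measurable log-concave function. Then the marginal function x ↦ ∫_{ℝ^{d₂}} f(x,y) dy is log-concave on ℝ^{d₁} (Prékopa's theorem). -/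
open MeasureTheory Set Real Filter Topology
open scoped ENNReal NNReal

open scoped Pointwise

section AuxPrekopa

private lemma le_biSup_Iio (x : ℝ≥0∞) : x ≤ ⨆ r ∈ Iio x, (r : ℝ≥0∞) := by
  refine le_of_forall_lt fun c hc => ?_
  obtain ⟨c', h1, h2⟩ := exists_between hc
  exact h1.trans_le (le_iSup₂_of_le c' h2 le_rfl)

lemma cpt_sum (K L : Set ℝ) (hK : IsCompact K) (hL : IsCompact L)
    (hKne : K.Nonempty) (hLne : L.Nonempty) :
    volume K + volume L ≤ volume (K + L) := by
  obtain ⟨M, m⟩ : True := trivial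
  have hMK : sSup K ∈ K := hK.sSup_mem hKne
  have hmL : sInf L ∈ L := hL.sInf_mem hLne
  set X : Set ℝ := (fun x => x + sInf L) '' K with hX
  set Y : Set ℝ := (fun y => sSup K + y) '' L with hY
  have hXsub : X ⊆ K + L := by
    rintro _ ⟨x, hx, rfl⟩; exact Set.add_mem_add hx hmL
  have hYsub : Y ⊆ K + L := by
    rintro _ ⟨y, hy, rfl⟩; exact Set.add_mem_add hMK hy
  have hXle : ∀ z ∈ X, z ≤ sSup K + sInf L := by
    rintro _ ⟨x, hx, rfl⟩
    exact add_le_add_left (le_csSup hK.bddAbove hx) _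
  have hYge : ∀ z ∈ Y, sSup K + sInf L ≤ z := by
    rintro _ ⟨y, hy, rfl⟩
    exact add_le_add_right (csInf_le hL.bddBelow hy) _
  have hvolX : volume X = volume K := by
    rw [hX, Set.image_add_right]; exact measure_preimage_add_right volume _ K
  have hvolY : volume Y = volume L := by
    rw [hY, Set.image_add_left]; exact measure_preimage_add volume _ L
  have hYmeas : MeasurableSet Y := ((hL.image (continuous_add_left _))).measurableSet
  set X' : Set ℝ := X ∩ Iio (sSup K + sInf L) with hX'
  have hdisj : Disjoint X' Y := by
    rw [Set.disjoint_left]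
    rintro z ⟨_, hz2⟩ hzY
    exact absurd (hYge z hzY) (not_le.2 hz2)
  have hXX' : volume X ≤ volume X' := by
    have hsub : X ⊆ X' ∪ {sSup K + sInf L} := by
      intro z hz
      rcases lt_or_eq_of_le (hXle z hz) with h | h
      · exact Or.inl ⟨hz, h⟩
      · exact Or.inr (by simp [h])
    calc volume X ≤ volume (X' ∪ {sSup K + sInf L}) := measure_mono hsub
      _ ≤ volume X' + volume {sSup K + sInf L} := measure_union_le _ _
      _ = volume X' := by simp
  calc volume K + volume L = volume X + volume Y := by rw [hvolX, hvolY]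
    _ ≤ volume X' + volume Y := add_le_add_left hXX' _
    _ = volume (X' ∪ Y) := (measure_union hdisj hYmeas).symm
    _ ≤ volume (K + L) := measure_mono (Set.union_subset (fun z hz => hXsub hz.1) hYsub)

set_option maxHeartbeats 1000000 in
lemma meas_sum (A B : Set ℝ) (hA : MeasurableSet A) (hB : MeasurableSet B)
    (hAne : A.Nonempty) (hBne : B.Nonempty) :
    volume A + volume B ≤ volume (A + B) := by
  rcases eq_or_ne (volume A) 0 with h0 | h0
  · rw [h0, zero_add]
    obtain ⟨t, ht⟩ := hAne
    calc volume B = volume ((fun y => t + y) '' B) := by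
          rw [Set.image_add_left]; exact (measure_preimage_add volume _ B).symm
      _ ≤ volume (A + B) := measure_mono (by rintro _ ⟨y, hy, rfl⟩; exact Set.add_mem_add ht hy)
  rcases eq_or_ne (volume B) 0 with h1 | h1
  · rw [h1, add_zero]
    obtain ⟨t, ht⟩ := hBne
    calc volume A = volume ((fun x => x + t) '' A) := by
          rw [Set.image_add_right]; exact (measure_preimage_add_right volume _ A).symm
      _ ≤ volume (A + B) := measure_mono (by rintro _ ⟨y, hy, rfl⟩; exact Set.add_mem_add hy ht)
  calc volume A + volume B
      ≤ (⨆ r ∈ Iio (volume A), (r : ℝ≥0∞)) + ⨆ s ∈ Iio (volume B), (s : ℝ≥0∞) :=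
        add_le_add (le_biSup_Iio _) (le_biSup_Iio _)
    _ ≤ volume (A + B) := by
        have h0' : (Iio (volume A)).Nonempty := ⟨0, pos_iff_ne_zero.2 h0⟩
        have h1' : (Iio (volume B)).Nonempty := ⟨0, pos_iff_ne_zero.2 h1⟩
        refine ENNReal.biSup_add_biSup_le (f := fun r => r) (g := fun r => r) h0' h1' ?_
        intro r hr s hs
        obtain ⟨K, hKA, hKc, hKr⟩ := hA.exists_lt_isCompact hr
        obtain ⟨L, hLB, hLc, hLs⟩ := hB.exists_lt_isCompact hs
        have hKne : K.Nonempty := by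
          rw [Set.nonempty_iff_ne_empty]; rintro rfl; simp at hKr
        have hLne : L.Nonempty := by
          rw [Set.nonempty_iff_ne_empty]; rintro rfl; simp at hLs
        calc (r : ℝ≥0∞) + s ≤ volume K + volume L := add_le_add hKr.le hLs.le
          _ ≤ volume (K + L) := cpt_sum K L hKc hLc hKne hLne
          _ ≤ volume (A + B) := measure_mono (Set.add_subset_add hKA hLB)

private lemma ennreal_amgm {a b : ℝ} (ha : 0 < a) (hb : 0 < b) (hab : a + b = 1)
    (x y : ℝ≥0∞) : x ^ a * y ^ b ≤ ENNReal.ofReal a * x + ENNReal.ofReal b * y := by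
  rcases eq_or_ne x ⊤ with rfl | hx
  · rcases eq_or_ne y 0 with rfl | hy
    · rw [ENNReal.zero_rpow_of_pos hb, mul_zero]; exact zero_le
    · have h1 : ENNReal.ofReal a * ⊤ = ⊤ := ENNReal.mul_top (ENNReal.ofReal_pos.2 ha).ne'
      rw [h1, top_add]; exact le_top
  rcases eq_or_ne y ⊤ with rfl | hy
  · rcases eq_or_ne x 0 with rfl | hx0
    · rw [ENNReal.zero_rpow_of_pos ha, zero_mul]; exact zero_le
    · have h1 : ENNReal.ofReal b * ⊤ = ⊤ := ENNReal.mul_top (ENNReal.ofReal_pos.2 hb).ne'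
      rw [h1, add_top]; exact le_top
  lift x to ℝ≥0 using hx
  lift y to ℝ≥0 using hy
  have key := NNReal.geom_mean_le_arith_mean2_weighted (w₁ := a.toNNReal)
    (w₂ := b.toNNReal) (p₁ := x) (p₂ := y)
    (by rw [← Real.toNNReal_add ha.le hb.le, hab, Real.toNNReal_one])
  rw [Real.coe_toNNReal a ha.le, Real.coe_toNNReal b hb.le] at key
  rw [show ENNReal.ofReal a = (a.toNNReal : ℝ≥0∞) from rfl,
    show ENNReal.ofReal b = (b.toNNReal : ℝ≥0∞) from rfl]
  calc (x : ℝ≥0∞) ^ a * (y : ℝ≥0∞) ^ b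
      = ((x ^ a * y ^ b : ℝ≥0) : ℝ≥0∞) := by
        rw [ENNReal.coe_mul, ENNReal.coe_rpow_of_nonneg _ ha.le,
          ENNReal.coe_rpow_of_nonneg _ hb.le]
    _ ≤ ((a.toNNReal * x + b.toNNReal * y : ℝ≥0) : ℝ≥0∞) := ENNReal.coe_le_coe.2 key
    _ = _ := by push_cast; ring

private lemma ennreal_iSup_rpow {f : ℕ → ℝ≥0∞} (hf : Monotone f) {c : ℝ} (hc : 0 < c) :
    (⨆ n, f n) ^ c = ⨆ n, f n ^ c := by
  have h1 : Tendsto f atTop (𝓝 (⨆ n, f n)) := tendsto_atTop_iSup hf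
  have h2 : Tendsto (fun n => f n ^ c) atTop (𝓝 ((⨆ n, f n) ^ c)) :=
    (ENNReal.continuous_rpow_const.tendsto _).comp h1
  have h3 : Monotone fun n => f n ^ c := fun i j hij => ENNReal.rpow_le_rpow (hf hij) hc.le
  exact tendsto_nhds_unique h2 (tendsto_atTop_iSup h3)

private lemma layercake_ennreal {g : ℝ → ℝ≥0∞} (hg : Measurable g) (hg1 : ∀ u, g u ≤ 1) :
    ∫⁻ u, g u = ∫⁻ t in Ioi (0:ℝ), volume {u | ENNReal.ofReal t < g u} := by
  have hgt : ∀ u, g u ≠ ⊤ := fun u => ((hg1 u).trans_lt ENNReal.one_lt_top).ne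
  have h1 : ∀ u, g u = ENNReal.ofReal ((g u).toReal) := fun u =>
    (ENNReal.ofReal_toReal (hgt u)).symm
  calc ∫⁻ u, g u = ∫⁻ u, ENNReal.ofReal ((g u).toReal) := lintegral_congr h1
    _ = ∫⁻ t in Ioi (0:ℝ), volume {u | t < (g u).toReal} :=
        lintegral_eq_lintegral_meas_lt volume
          (Eventually.of_forall fun u => ENNReal.toReal_nonneg)
          hg.ennreal_toReal.aemeasurable
    _ = ∫⁻ t in Ioi (0:ℝ), volume {u | ENNReal.ofReal t < g u} := by
        refine setLIntegral_congr_fun measurableSet_Ioi (fun t ht => ?_)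
        show volume _ = volume _
        congr 1
        ext u
        simp only [mem_setOf_eq]
        rw [ENNReal.ofReal_lt_iff_lt_toReal (le_of_lt ht) (hgt u)]

private lemma dim1_core {a b : ℝ} (ha : 0 < a) (hb : 0 < b) (hab : a + b = 1)
    {g h k : ℝ → ℝ≥0∞} (hg : Measurable g) (hh : Measurable h) (hk : Measurable k)
    (hg1 : ∀ u, g u ≤ 1) (hh1 : ∀ v, h v ≤ 1) (hk1 : ∀ w, k w ≤ 1)
    (hgs : 1 ≤ ⨆ u, g u) (hhs : 1 ≤ ⨆ v, h v)
    (hyp : ∀ u v, g u ^ a * h v ^ b ≤ k (a * u + b * v)) :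
    ENNReal.ofReal a * (∫⁻ u, g u) + ENNReal.ofReal b * (∫⁻ v, h v) ≤ ∫⁻ w, k w := by
  classical
  set φg : ℝ → ℝ≥0∞ := fun t => volume {u | ENNReal.ofReal t < g u} with hφg
  set φh : ℝ → ℝ≥0∞ := fun t => volume {v | ENNReal.ofReal t < h v} with hφh
  set φk : ℝ → ℝ≥0∞ := fun t => volume {w | ENNReal.ofReal t < k w} with hφk
  have hmg : Measurable φg := by
    refine Antitone.measurable fun t t' htt' => measure_mono fun u hu => ?_
    exact lt_of_le_of_lt (ENNReal.ofReal_le_ofReal htt') hu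
  have hmh : Measurable φh := by
    refine Antitone.measurable fun t t' htt' => measure_mono fun u hu => ?_
    exact lt_of_le_of_lt (ENNReal.ofReal_le_ofReal htt') hu
  -- the pointwise level-set inequality
  have main : ∀ t ∈ Ioi (0:ℝ),
      ENNReal.ofReal a * φg t + ENNReal.ofReal b * φh t ≤ φk t := by
    intro t ht
    rcases le_or_gt 1 t with ht1 | ht1
    · have e1 : {u | ENNReal.ofReal t < g u} = ∅ := by
        ext u; simp only [mem_setOf_eq, mem_empty_iff_false, iff_false, not_lt]
        exact (hg1 u).trans (by simpa using ENNReal.ofReal_le_ofReal ht1)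
      have e2 : {v | ENNReal.ofReal t < h v} = ∅ := by
        ext v; simp only [mem_setOf_eq, mem_empty_iff_false, iff_false, not_lt]
        exact (hh1 v).trans (by simpa using ENNReal.ofReal_le_ofReal ht1)
      simp [hφg, hφh, e1, e2]
    · set A := {u | ENNReal.ofReal t < g u} with hA
      set B := {v | ENNReal.ofReal t < h v} with hB
      have htlt : ENNReal.ofReal t < 1 := ENNReal.ofReal_lt_one.2 ht1
      have hAne : A.Nonempty := by
        obtain ⟨u, hu⟩ := lt_iSup_iff.1 (htlt.trans_le hgs)
        exact ⟨u, hu⟩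
      have hBne : B.Nonempty := by
        obtain ⟨v, hv⟩ := lt_iSup_iff.1 (htlt.trans_le hhs)
        exact ⟨v, hv⟩
      have hAmeas : MeasurableSet A := measurableSet_lt measurable_const hg
      have hBmeas : MeasurableSet B := measurableSet_lt measurable_const hh
      have ht0 : ENNReal.ofReal t ≠ 0 := (ENNReal.ofReal_pos.2 ht).ne'
      have hincl : a • A + b • B ⊆ {w | ENNReal.ofReal t < k w} := by
        rintro _ ⟨_, ⟨u, hu, rfl⟩, _, ⟨v, hv, rfl⟩, rfl⟩
        simp only [smul_eq_mul, mem_setOf_eq]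
        calc ENNReal.ofReal t = ENNReal.ofReal t ^ a * ENNReal.ofReal t ^ b := by
              rw [← ENNReal.rpow_add _ _ ht0 ENNReal.ofReal_ne_top, hab, ENNReal.rpow_one]
          _ < g u ^ a * h v ^ b :=
              ENNReal.mul_lt_mul (ENNReal.rpow_lt_rpow hu ha) (ENNReal.rpow_lt_rpow hv hb)
          _ ≤ k (a * u + b * v) := hyp u v
      have hsmulA : volume (a • A) = ENNReal.ofReal a * volume A := by
        rw [Measure.addHaar_smul]
        congr 2
        simp [abs_of_pos ha]
      have hsmulB : volume (b • B) = ENNReal.ofReal b * volume B := by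
        rw [Measure.addHaar_smul]
        congr 2
        simp [abs_of_pos hb]
      calc ENNReal.ofReal a * φg t + ENNReal.ofReal b * φh t
          = volume (a • A) + volume (b • B) := by rw [hsmulA, hsmulB]
        _ ≤ volume (a • A + b • B) :=
            meas_sum _ _ (hAmeas.const_smul₀ a) (hBmeas.const_smul₀ b)
              (hAne.smul_set) (hBne.smul_set)
        _ ≤ φk t := measure_mono hincl
  have hmk : Measurable φk := by
    refine Antitone.measurable fun t t' htt' => measure_mono fun u hu => ?_
    exact lt_of_le_of_lt (ENNReal.ofReal_le_ofReal htt') hu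
  calc ENNReal.ofReal a * (∫⁻ u, g u) + ENNReal.ofReal b * (∫⁻ v, h v)
      = (∫⁻ t in Ioi (0:ℝ), ENNReal.ofReal a * φg t)
        + ∫⁻ t in Ioi (0:ℝ), ENNReal.ofReal b * φh t := by
        have lg := layercake_ennreal hg hg1
        have lh := layercake_ennreal hh hh1
        rw [lg, lh, ← lintegral_const_mul' _ _ (ENNReal.ofReal_ne_top (r := a)),
          ← lintegral_const_mul' _ _ (ENNReal.ofReal_ne_top (r := b))]
    _ = ∫⁻ t in Ioi (0:ℝ), (ENNReal.ofReal a * φg t + ENNReal.ofReal b * φh t) :=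
        (lintegral_add_left (hmg.const_mul _) _).symm
    _ ≤ ∫⁻ t in Ioi (0:ℝ), φk t := setLIntegral_mono hmk main
    _ = ∫⁻ w, k w := (layercake_ennreal hk hk1).symm

private lemma dim1_bdd {a b : ℝ} (ha : 0 < a) (hb : 0 < b) (hab : a + b = 1)
    {g h k : ℝ → ℝ≥0∞} (hg : Measurable g) (hh : Measurable h) (hk : Measurable k)
    (hgtop : (⨆ u, g u) ≠ ⊤) (hhtop : (⨆ v, h v) ≠ ⊤)
    (hyp : ∀ u v, g u ^ a * h v ^ b ≤ k (a * u + b * v)) :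
    (∫⁻ u, g u) ^ a * (∫⁻ v, h v) ^ b ≤ ∫⁻ w, k w := by
  rcases eq_or_ne (∫⁻ u, g u) 0 with hint0 | hint0
  · rw [hint0, ENNReal.zero_rpow_of_pos ha, zero_mul]; exact zero_le
  rcases eq_or_ne (∫⁻ v, h v) 0 with hint1 | hint1
  · rw [hint1, ENNReal.zero_rpow_of_pos hb, mul_zero]; exact zero_le
  set Sg := ⨆ u, g u with hSg
  set Sh := ⨆ v, h v with hSh
  have hSg0 : Sg ≠ 0 := by
    intro h0
    exact hint0 (by
      have : ∀ u, g u = 0 := fun u => le_antisymm ((le_iSup g u).trans h0.le) (zero_le)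
      simp [lintegral_congr this])
  have hSh0 : Sh ≠ 0 := by
    intro h0
    exact hint1 (by
      have : ∀ v, h v = 0 := fun v => le_antisymm ((le_iSup h v).trans h0.le) (zero_le)
      simp [lintegral_congr this])
  have hSga0 : Sg ^ a ≠ 0 := by simp [ENNReal.rpow_eq_zero_iff, hSg0, hgtop, ha, ha.le, not_lt]
  have hSha0 : Sh ^ b ≠ 0 := by simp [ENNReal.rpow_eq_zero_iff, hSh0, hhtop, hb, hb.le, not_lt]
  have hSgat : Sg ^ a ≠ ⊤ := by simp [ENNReal.rpow_eq_top_iff, hSg0, hgtop, ha, ha.le, not_lt]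
  have hShat : Sh ^ b ≠ ⊤ := by simp [ENNReal.rpow_eq_top_iff, hSh0, hhtop, hb, hb.le, not_lt]
  set c := Sg ^ a * Sh ^ b with hc
  have hc0 : c ≠ 0 := mul_ne_zero hSga0 hSha0
  have hct : c ≠ ⊤ := ENNReal.mul_ne_top hSgat hShat
  set g' : ℝ → ℝ≥0∞ := fun u => g u * Sg⁻¹ with hg'def
  set h' : ℝ → ℝ≥0∞ := fun v => h v * Sh⁻¹ with hh'def
  set k'' : ℝ → ℝ≥0∞ := fun w => min (k w * c⁻¹) 1 with hk''def
  have hg' : Measurable g' := hg.mul_const _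
  have hh' : Measurable h' := hh.mul_const _
  have hk'' : Measurable k'' := (hk.mul_const _).min measurable_const
  have hg'1 : ∀ u, g' u ≤ 1 := fun u => by
    calc g u * Sg⁻¹ ≤ Sg * Sg⁻¹ := mul_le_mul_left (le_iSup g u) _
      _ = 1 := ENNReal.mul_inv_cancel hSg0 hgtop
  have hh'1 : ∀ v, h' v ≤ 1 := fun v => by
    calc h v * Sh⁻¹ ≤ Sh * Sh⁻¹ := mul_le_mul_left (le_iSup h v) _
      _ = 1 := ENNReal.mul_inv_cancel hSh0 hhtop
  have hk''1 : ∀ w, k'' w ≤ 1 := fun w => min_le_right _ _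
  have hg's : 1 ≤ ⨆ u, g' u := by
    rw [hg'def, ← ENNReal.iSup_mul, ← hSg, ENNReal.mul_inv_cancel hSg0 hgtop]
  have hh's : 1 ≤ ⨆ v, h' v := by
    rw [hh'def, ← ENNReal.iSup_mul, ← hSh, ENNReal.mul_inv_cancel hSh0 hhtop]
  have hinvsplit : Sg⁻¹ ^ a * Sh⁻¹ ^ b = c⁻¹ := by
    rw [ENNReal.inv_rpow, ENNReal.inv_rpow, hc,
      ENNReal.mul_inv (Or.inl hSga0) (Or.inl hSgat)]
  have hyp'' : ∀ u v, g' u ^ a * h' v ^ b ≤ k'' (a * u + b * v) := by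
    intro u v
    refine le_min ?_ ?_
    · have e1 : g' u ^ a = g u ^ a * Sg⁻¹ ^ a :=
        ENNReal.mul_rpow_of_ne_top (ne_top_of_le_ne_top hgtop (le_iSup g u))
          (ENNReal.inv_ne_top.2 hSg0) a
      have e2 : h' v ^ b = h v ^ b * Sh⁻¹ ^ b :=
        ENNReal.mul_rpow_of_ne_top (ne_top_of_le_ne_top hhtop (le_iSup h v))
          (ENNReal.inv_ne_top.2 hSh0) b
      calc g' u ^ a * h' v ^ b
          = (g u ^ a * h v ^ b) * (Sg⁻¹ ^ a * Sh⁻¹ ^ b) := by rw [e1, e2]; ring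
        _ ≤ k (a * u + b * v) * (Sg⁻¹ ^ a * Sh⁻¹ ^ b) := mul_le_mul_left (hyp u v) _
        _ = k (a * u + b * v) * c⁻¹ := by rw [hinvsplit]
    · calc g' u ^ a * h' v ^ b ≤ 1 ^ a * 1 ^ b :=
          mul_le_mul' (ENNReal.rpow_le_rpow (hg'1 u) ha.le)
            (ENNReal.rpow_le_rpow (hh'1 v) hb.le)
        _ = 1 := by simp
  have core := dim1_core ha hb hab hg' hh' hk'' hg'1 hh'1 hk''1 hg's hh's hyp''
  have eg : (∫⁻ u, g' u) = (∫⁻ u, g u) * Sg⁻¹ :=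
    lintegral_mul_const' _ _ (ENNReal.inv_ne_top.2 hSg0)
  have eh : (∫⁻ v, h' v) = (∫⁻ v, h v) * Sh⁻¹ :=
    lintegral_mul_const' _ _ (ENNReal.inv_ne_top.2 hSh0)
  have ek : (∫⁻ w, k'' w) ≤ (∫⁻ w, k w) * c⁻¹ := by
    calc (∫⁻ w, k'' w) ≤ ∫⁻ w, k w * c⁻¹ := lintegral_mono fun w => min_le_left _ _
      _ = (∫⁻ w, k w) * c⁻¹ := lintegral_mul_const' _ _ (ENNReal.inv_ne_top.2 hc0)
  have key : ((∫⁻ u, g u) * Sg⁻¹) ^ a * ((∫⁻ v, h v) * Sh⁻¹) ^ b ≤ (∫⁻ w, k w) * c⁻¹ := by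
    calc ((∫⁻ u, g u) * Sg⁻¹) ^ a * ((∫⁻ v, h v) * Sh⁻¹) ^ b
        ≤ ENNReal.ofReal a * ((∫⁻ u, g u) * Sg⁻¹) + ENNReal.ofReal b * ((∫⁻ v, h v) * Sh⁻¹) :=
          ennreal_amgm ha hb hab _ _
      _ = ENNReal.ofReal a * (∫⁻ u, g' u) + ENNReal.ofReal b * (∫⁻ v, h' v) := by rw [eg, eh]
      _ ≤ ∫⁻ w, k'' w := core
      _ ≤ (∫⁻ w, k w) * c⁻¹ := ek
  have expand : ((∫⁻ u, g u) * Sg⁻¹) ^ a * ((∫⁻ v, h v) * Sh⁻¹) ^ b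
      = ((∫⁻ u, g u) ^ a * (∫⁻ v, h v) ^ b) * c⁻¹ := by
    rw [ENNReal.mul_rpow_of_ne_zero hint0 (ENNReal.inv_ne_zero.2 hgtop) a,
      ENNReal.mul_rpow_of_ne_zero hint1 (ENNReal.inv_ne_zero.2 hhtop) b, ← hinvsplit]
    ring
  rw [expand] at key
  calc (∫⁻ u, g u) ^ a * (∫⁻ v, h v) ^ b
      = (((∫⁻ u, g u) ^ a * (∫⁻ v, h v) ^ b) * c⁻¹) * c := by
        rw [mul_assoc, ENNReal.inv_mul_cancel hc0 hct, mul_one]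
    _ ≤ ((∫⁻ w, k w) * c⁻¹) * c := mul_le_mul_left key _
    _ = ∫⁻ w, k w := by rw [mul_assoc, ENNReal.inv_mul_cancel hc0 hct, mul_one]

private lemma dim1 {a b : ℝ} (ha : 0 < a) (hb : 0 < b) (hab : a + b = 1)
    {g h k : ℝ → ℝ≥0∞} (hg : Measurable g) (hh : Measurable h) (hk : Measurable k)
    (hyp : ∀ u v, g u ^ a * h v ^ b ≤ k (a * u + b * v)) :
    (∫⁻ u, g u) ^ a * (∫⁻ v, h v) ^ b ≤ ∫⁻ w, k w := by
  set gn : ℕ → ℝ → ℝ≥0∞ := fun n u => g u ⊓ (n : ℝ≥0∞) with hgn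
  set hn : ℕ → ℝ → ℝ≥0∞ := fun n v => h v ⊓ (n : ℝ≥0∞) with hhn
  have hgnm : ∀ n, Measurable (gn n) := fun n => hg.min measurable_const
  have hhnm : ∀ n, Measurable (hn n) := fun n => hh.min measurable_const
  have hgmono : Monotone gn := fun m n hmn u => inf_le_inf le_rfl (Nat.cast_le.2 hmn)
  have hhmono : Monotone hn := fun m n hmn v => inf_le_inf le_rfl (Nat.cast_le.2 hmn)
  have hgsup : ∀ u, (⨆ n, gn n u) = g u := fun u => by
    rw [hgn]; simp only
    rw [← inf_iSup_eq, ENNReal.iSup_natCast, inf_top_eq]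
  have hhsup : ∀ v, (⨆ n, hn n v) = h v := fun v => by
    rw [hhn]; simp only
    rw [← inf_iSup_eq, ENNReal.iSup_natCast, inf_top_eq]
  have eg : (∫⁻ u, g u) = ⨆ n, ∫⁻ u, gn n u := by
    rw [← lintegral_iSup hgnm hgmono]
    exact lintegral_congr fun u => (hgsup u).symm
  have eh : (∫⁻ v, h v) = ⨆ n, ∫⁻ v, hn n v := by
    rw [← lintegral_iSup hhnm hhmono]
    exact lintegral_congr fun v => (hhsup v).symm
  have hmono1 : Monotone fun n => ∫⁻ u, gn n u := fun m n hmn =>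
    lintegral_mono fun u => hgmono hmn u
  have hmono2 : Monotone fun n => ∫⁻ v, hn n v := fun m n hmn =>
    lintegral_mono fun v => hhmono hmn v
  have hpair : ∀ p q : ℕ, (∫⁻ u, gn p u) ^ a * (∫⁻ v, hn q v) ^ b ≤ ∫⁻ w, k w := by
    intro p q
    refine dim1_bdd ha hb hab (hgnm p) (hhnm q) hk ?_ ?_ ?_
    · exact fun htop => (ENNReal.natCast_ne_top p) (top_le_iff.1
        (htop ▸ iSup_le fun u => inf_le_right) |>.symm ▸ rfl)
    · exact fun htop => (ENNReal.natCast_ne_top q) (top_le_iff.1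
        (htop ▸ iSup_le fun v => inf_le_right) |>.symm ▸ rfl)
    · intro u v
      calc gn p u ^ a * hn q v ^ b ≤ g u ^ a * h v ^ b :=
            mul_le_mul' (ENNReal.rpow_le_rpow inf_le_left ha.le)
              (ENNReal.rpow_le_rpow inf_le_left hb.le)
        _ ≤ k (a * u + b * v) := hyp u v
  calc (∫⁻ u, g u) ^ a * (∫⁻ v, h v) ^ b
      = (⨆ p, ∫⁻ u, gn p u) ^ a * (⨆ q, ∫⁻ v, hn q v) ^ b := by rw [eg, eh]
    _ = (⨆ p, (∫⁻ u, gn p u) ^ a) * ⨆ q, (∫⁻ v, hn q v) ^ b := by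
        rw [ennreal_iSup_rpow hmono1 ha, ennreal_iSup_rpow hmono2 hb]
    _ = ⨆ p, ⨆ q, ((∫⁻ u, gn p u) ^ a * (∫⁻ v, hn q v) ^ b) := by
        rw [ENNReal.iSup_mul]
        exact iSup_congr fun p => ENNReal.mul_iSup ((∫⁻ u, gn p u) ^ a) (fun q => (∫⁻ v, hn q v) ^ b)
    _ ≤ ∫⁻ w, k w := iSup_le fun p => iSup_le fun q => hpair p q

private lemma plN (n : ℕ) {a b : ℝ} (ha : 0 < a) (hb : 0 < b) (hab : a + b = 1)
    {g h k : (Fin n → ℝ) → ℝ≥0∞} (hg : Measurable g) (hh : Measurable h) (hk : Measurable k)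
    (hyp : ∀ u v, g u ^ a * h v ^ b ≤ k (a • u + b • v)) :
    (∫⁻ u, g u) ^ a * (∫⁻ v, h v) ^ b ≤ ∫⁻ w, k w := by
  induction n generalizing a b with
  | zero =>
    have e : ∀ (f : (Fin 0 → ℝ) → ℝ≥0∞), ∫⁻ x, f x = f default := by
      intro f
      rw [lintegral_unique]
      simp [volume_pi, Measure.pi_univ]
      exact congrArg f (Subsingleton.elim _ _)
    rw [e g, e h, e k]
    have := hyp default default
    rwa [Subsingleton.elim (a • (default : Fin 0 → ℝ) + b • (default : Fin 0 → ℝ))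
      (default : Fin 0 → ℝ)] at this
  | succ n ih =>
    set e := MeasurableEquiv.piFinSuccAbove (fun _ : Fin (n+1) => ℝ) 0 with he
    have mp : MeasurePreserving e volume
        ((volume : Measure ℝ).prod (volume : Measure (Fin n → ℝ))) := by
      simpa only [volume_pi] using
        measurePreserving_piFinSuccAbove (fun _ : Fin (n+1) => (volume : Measure ℝ)) 0
    set G : ℝ × (Fin n → ℝ) → ℝ≥0∞ := fun p => g (e.symm p) with hGdef
    set H : ℝ × (Fin n → ℝ) → ℝ≥0∞ := fun p => h (e.symm p) with hHdef
    set K : ℝ × (Fin n → ℝ) → ℝ≥0∞ := fun p => k (e.symm p) with hKdef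
    have hGm : Measurable G := hg.comp e.symm.measurable
    have hHm : Measurable H := hh.comp e.symm.measurable
    have hKm : Measurable K := hk.comp e.symm.measurable
    have lin : ∀ (p q : ℝ × (Fin n → ℝ)),
        a • e.symm p + b • e.symm q = e.symm (a • p + b • q) := by
      intro p q
      apply e.injective
      simp only [MeasurableEquiv.apply_symm_apply]
      rfl
    set Gs : ℝ → ℝ≥0∞ := fun s => ∫⁻ u, G (s, u) with hGs
    set Hs : ℝ → ℝ≥0∞ := fun t => ∫⁻ v, H (t, v) with hHs
    set Ks : ℝ → ℝ≥0∞ := fun r => ∫⁻ w, K (r, w) with hKs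
    have hGsm : Measurable Gs := Measurable.lintegral_prod_right (f := fun s u => G (s, u)) hGm
    have hHsm : Measurable Hs := Measurable.lintegral_prod_right (f := fun s u => H (s, u)) hHm
    have hKsm : Measurable Ks := Measurable.lintegral_prod_right (f := fun s u => K (s, u)) hKm
    have hyp1 : ∀ s t : ℝ, Gs s ^ a * Hs t ^ b ≤ Ks (a * s + b * t) := by
      intro s t
      refine ih ha hb hab (hGm.comp (measurable_prodMk_left (x := s)))
        (hHm.comp (measurable_prodMk_left (x := t)))
        (hKm.comp (measurable_prodMk_left (x := a * s + b * t))) ?_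
      intro u v
      have h1 := hyp (e.symm (s, u)) (e.symm (t, v))
      rw [lin (s, u) (t, v)] at h1
      have h2 : a • ((s, u) : ℝ × (Fin n → ℝ)) + b • ((t, v) : ℝ × (Fin n → ℝ))
          = (a * s + b * t, a • u + b • v) := rfl
      rw [h2] at h1
      exact h1
    have key := dim1 ha hb hab hGsm hHsm hKsm hyp1
    have TG : (∫⁻ x, g x) = ∫⁻ s, Gs s := by
      rw [← (mp.symm e).lintegral_comp hg]
      exact lintegral_prod G hGm.aemeasurable
    have TH : (∫⁻ x, h x) = ∫⁻ t, Hs t := by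
      rw [← (mp.symm e).lintegral_comp hh]
      exact lintegral_prod H hHm.aemeasurable
    have TK : (∫⁻ x, k x) = ∫⁻ r, Ks r := by
      rw [← (mp.symm e).lintegral_comp hk]
      exact lintegral_prod K hKm.aemeasurable
    rw [TG, TH, TK]
    exact key

end AuxPrekopa

noncomputable section

/-- `f` is log-concave: `f(ax+by) ≥ f(x)^a f(y)^b` for convex combinations
(equivalently, `log f` is concave with `log 0 := −∞`). -/
def LogConcaveFn {E : Type*} [AddCommGroup E] [Module ℝ E] (f : E → ℝ) : Prop :=
  ∀ x y : E, ∀ a b : ℝ, 0 ≤ a → 0 ≤ b → a + b = 1 →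
    f x ^ a * f y ^ b ≤ f (a • x + b • y)

/-- log-concavity for a `[0,∞]`-valued function. -/
def LogConcaveENN {E : Type*} [AddCommGroup E] [Module ℝ E] (m : E → ℝ≥0∞) : Prop :=
  ∀ x y : E, ∀ a b : ℝ, 0 ≤ a → 0 ≤ b → a + b = 1 →
    m x ^ a * m y ^ b ≤ m (a • x + b • y)

/-- Prékopa's theorem: marginals of log-concave functions are log-concave. -/
theorem stmt8 (d₁ d₂ : ℕ) (f : (Fin d₁ → ℝ) × (Fin d₂ → ℝ) → ℝ)
    (hmeas : Measurable f) (hnonneg : ∀ z, 0 ≤ f z) (hlc : LogConcaveFn f) :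
    LogConcaveENN (fun x : Fin d₁ → ℝ => ∫⁻ y : Fin d₂ → ℝ, ENNReal.ofReal (f (x, y))) := by
  intro x y a b ha hb hab
  simp only
  rcases eq_or_lt_of_le ha with rfl | ha'
  · have hb1 : b = 1 := by linarith
    subst hb1
    simp
  rcases eq_or_lt_of_le hb with rfl | hb'
  · have ha1 : a = 1 := by linarith
    subst ha1
    simp
  have hgm : Measurable fun u : Fin d₂ → ℝ => ENNReal.ofReal (f (x, u)) :=
    (hmeas.comp (measurable_const.prodMk measurable_id)).ennreal_ofReal
  have hhm : Measurable fun v : Fin d₂ → ℝ => ENNReal.ofReal (f (y, v)) :=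
    (hmeas.comp (measurable_const.prodMk measurable_id)).ennreal_ofReal
  have hkm : Measurable fun w : Fin d₂ → ℝ => ENNReal.ofReal (f (a • x + b • y, w)) :=
    (hmeas.comp (measurable_const.prodMk measurable_id)).ennreal_ofReal
  refine plN d₂ ha' hb' hab hgm hhm hkm ?_
  intro u v
  have h1 := hlc (x, u) (y, v) a b ha hb hab
  have h2 : a • ((x, u) : (Fin d₁ → ℝ) × (Fin d₂ → ℝ)) + b • ((y, v) : (Fin d₁ → ℝ) × (Fin d₂ → ℝ))
      = (a • x + b • y, a • u + b • v) := rfl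
  rw [h2] at h1
  calc ENNReal.ofReal (f (x, u)) ^ a * ENNReal.ofReal (f (y, v)) ^ b
      = ENNReal.ofReal (f (x, u) ^ a * f (y, v) ^ b) := by
        rw [ENNReal.ofReal_rpow_of_nonneg (hnonneg _) ha, ENNReal.ofReal_rpow_of_nonneg (hnonneg _) hb,
          ← ENNReal.ofReal_mul (Real.rpow_nonneg (hnonneg _) a)]
    _ ≤ ENNReal.ofReal (f (a • x + b • y, a • u + b • v)) := ENNReal.ofReal_le_ofReal h1

end
end

section
/- Let P be a Borel probability measure on ℝᵈ and define, for φ ∈ Φ, the functional L(φ,P) := ∫_{ℝᵈ} φ dP − ∫_{ℝᵈ} e^{φ(x)} dx + 1. (a) If ∫_{ℝᵈ} ‖x‖ dP(x) = ∞, then every φ ∈ Φ for which L(φ,P) is well-defined satisfies L(φ,P) = −∞. (b) If ∫_{ℝᵈ} ‖x‖ dP(x) < ∞ but P(H) = 1 for some affine hyperplane H ⊆ ℝᵈ, then for every M ∈ ℝ there exists φ ∈ Φ with L(φ,P) well-defined and L(φ,P) > M (i.e., L*(P) := sup_{φ∈Φ} L(φ,P) = ∞). -/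
open MeasureTheory Set Real Filter Topology
open scoped ENNReal NNReal

noncomputable section

variable {d : ℕ}

/-- the class `Φ` of upper semicontinuous, concave, coercive functions
`φ : ℝᵈ → [−∞,∞)`. -/
def PhiClass (φ : EuclideanSpace ℝ (Fin d) → EReal) : Prop :=
  UpperSemicontinuous φ ∧
  (∀ x y : EuclideanSpace ℝ (Fin d), ∀ a b : ℝ, 0 ≤ a → 0 ≤ b → a + b = 1 →
    (a : EReal) * φ x + (b : EReal) * φ y ≤ φ (a • x + b • y)) ∧
  (∀ x, φ x ≠ ⊤) ∧
  Filter.Tendsto φ (Filter.cocompact (EuclideanSpace ℝ (Fin d))) (nhds (⊥ : EReal))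

/-- `∫ φ₊ dP`. -/
def phiPos (φ : EuclideanSpace ℝ (Fin d) → EReal)
    (P : Measure (EuclideanSpace ℝ (Fin d))) : ℝ≥0∞ := ∫⁻ x, ePos (φ x) ∂P

/-- `∫ φ₋ dP`. -/
def phiNeg (φ : EuclideanSpace ℝ (Fin d) → EReal)
    (P : Measure (EuclideanSpace ℝ (Fin d))) : ℝ≥0∞ := ∫⁻ x, ePos (-(φ x)) ∂P

/-- the functional `L(φ,P) = ∫ φ dP − ∫ e^φ dx + 1`, as an extended real. -/
def LPhi (φ : EuclideanSpace ℝ (Fin d) → EReal)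
    (P : Measure (EuclideanSpace ℝ (Fin d))) : EReal :=
  ((phiPos φ P : EReal) - (phiNeg φ P : EReal))
    - ((∫⁻ x, EReal.exp (φ x) : ℝ≥0∞) : EReal) + 1

lemma EReal.bot_or_real (x : EReal) (hx : x ≠ ⊤) : x = ⊥ ∨ ∃ s : ℝ, x = (s : EReal) := by
  induction x with
  | bot => exact Or.inl rfl
  | coe s => exact Or.inr ⟨s, rfl⟩
  | top => exact absurd rfl hx


lemma ePos_coe (r : ℝ) : ePos (r : EReal) = ENNReal.ofReal r := by simp [ePos]

lemma ePos_neg_coe (r : ℝ) : ePos (-(r : EReal)) = ENNReal.ofReal (-r) := by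
  rw [← EReal.coe_neg, ePos_coe]

lemma EReal.coe_ennreal_eq (x : ℝ≥0∞) (hx : x ≠ ⊤) :
    (x : EReal) = ((x.toReal : ℝ) : EReal) := by
  rw [← EReal.toReal_coe_ennreal]
  refine (EReal.coe_toReal ?_ ?_).symm
  · exact fun h => hx (by rw [← EReal.coe_ennreal_top] at h; exact_mod_cast h)
  · intro h
    have : (0 : EReal) ≤ (x : EReal) := EReal.coe_ennreal_nonneg x
    rw [h] at this
    exact absurd this (by simp)


lemma coercive_bound {φ : EuclideanSpace ℝ (Fin d) → EReal}
    (hφ : Filter.Tendsto φ (Filter.cocompact (EuclideanSpace ℝ (Fin d))) (nhds (⊥ : EReal)))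
    (c : ℝ) : ∃ R : ℝ, 0 ≤ R ∧ ∀ x, R < ‖x‖ → φ x < (c : EReal) := by
  have h1 : φ ⁻¹' (Iio (c : EReal)) ∈ Filter.cocompact _ :=
    hφ (Iio_mem_nhds (by exact bot_lt_iff_ne_bot.2 (EReal.coe_ne_bot c)))
  rw [Filter.mem_cocompact] at h1
  obtain ⟨K, hK, hKs⟩ := h1
  obtain ⟨R, hR⟩ := hK.isBounded.subset_closedBall 0
  refine ⟨max R 0, le_max_right _ _, fun x hx => ?_⟩
  have : x ∉ K := by
    intro hxK
    have := hR hxK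
    simp only [Metric.mem_closedBall, dist_zero_right] at this
    exact absurd this (not_le.2 (lt_of_le_of_lt (le_max_left R 0) hx))
  exact hKs this

lemma decay_bound {φ : EuclideanSpace ℝ (Fin d) → EReal} (hφ : PhiClass φ)
    {w₀ : EuclideanSpace ℝ (Fin d)} {v₀ : ℝ} (hw : φ w₀ = (v₀ : ℝ)) :
    ∃ ρ K : ℝ, 0 < ρ ∧ ∀ x, ENNReal.ofReal ((‖x‖ - K) / ρ) ≤ ePos (-(φ x)) := by
  obtain ⟨R, hR0, hR⟩ := coercive_bound hφ.2.2.2 (-(|v₀| + 1))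
  set ρ : ℝ := R + ‖w₀‖ + 1 with hρdef
  have hρ : 0 < ρ := by positivity
  refine ⟨ρ, ‖w₀‖ + ρ, hρ, fun x => ?_⟩
  by_cases hfar : ρ ≤ ‖x - w₀‖
  · -- main case
    have hnx : 0 < ‖x - w₀‖ := lt_of_lt_of_le hρ hfar
    set t : ℝ := ρ / ‖x - w₀‖ with htdef
    have ht0 : 0 < t := div_pos hρ hnx
    have ht1 : t ≤ 1 := (div_le_one hnx).2 hfar
    have htn : t * ‖x - w₀‖ = ρ := by
      rw [htdef]; exact div_mul_cancel₀ _ hnx.ne'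
    set p := (1 - t) • w₀ + t • x with hpdef
    have hpw : p - w₀ = t • (x - w₀) := by
      rw [hpdef]; module
    have hpnorm : R < ‖p‖ := by
      have h1 : ‖p - w₀‖ = ρ := by
        rw [hpw, norm_smul, Real.norm_eq_abs, abs_of_pos ht0, htn]
      have h2 : ‖p - w₀‖ ≤ ‖p‖ + ‖w₀‖ := norm_sub_le _ _
      rw [h1] at h2
      rw [hρdef] at h2
      linarith
    have hp := hR p hpnorm
    have hconc := hφ.2.1 w₀ x (1 - t) t (by linarith) ht0.le (by ring)
    rw [hw] at hconc
    -- case on φ x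
    rcases EReal.bot_or_real (φ x) (hφ.2.2.1 x) with hx | ⟨s, hx⟩
    · rw [hx]
      simp [ePos]
    · rw [hx] at hconc
      rw [← EReal.coe_mul, ← EReal.coe_mul, ← EReal.coe_add] at hconc
      have hlt : ((1 - t) * v₀ + t * s : ℝ) < -(|v₀| + 1) := by
        exact_mod_cast lt_of_le_of_lt hconc hp
      have hs : s ≤ -(‖x - w₀‖ / ρ) := by
        have h1 : t * s ≤ -1 := by nlinarith [abs_nonneg v₀, le_abs_self v₀, neg_abs_le v₀]
        have h2 : ‖x - w₀‖ / ρ = 1 / t := by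
          rw [htdef]; field_simp
        rw [h2]
        have h2' : -(1 / t) = (-1) / t := by ring
        rw [h2', le_div_iff₀ ht0]
        linarith [h1, mul_comm t s]
      have hbound : (‖x‖ - (‖w₀‖ + ρ)) / ρ ≤ -s := by
        have h3 : ‖x‖ - ‖w₀‖ ≤ ‖x - w₀‖ := norm_sub_norm_le x w₀
        have h4 : (‖x‖ - (‖w₀‖ + ρ)) / ρ ≤ ‖x - w₀‖ / ρ := by
          gcongr
          linarith
        linarith
      rw [hx, ← EReal.coe_neg]
      simp only [ePos, EReal.coe_ne_top, if_false, EReal.toReal_coe]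
      exact ENNReal.ofReal_le_ofReal hbound
  · -- near case: LHS = 0
    push_neg at hfar
    have : ‖x‖ - (‖w₀‖ + ρ) ≤ 0 := by
      have := norm_sub_norm_le x w₀
      linarith
    have : (‖x‖ - (‖w₀‖ + ρ)) / ρ ≤ 0 := div_nonpos_of_nonpos_of_nonneg this hρ.le
    simp [ENNReal.ofReal_eq_zero.2 this]


lemma phiNeg_top {φ : EuclideanSpace ℝ (Fin d) → EReal} (hφ : PhiClass φ)
    (P : MeasureTheory.Measure (EuclideanSpace ℝ (Fin d))) [IsProbabilityMeasure P]
    (hP : (∫⁻ x, ENNReal.ofReal ‖x‖ ∂P) = ⊤) : phiNeg φ P = ⊤ := by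
  by_cases hbot : ∀ x, φ x = ⊥
  · have : ∀ x, ePos (-(φ x)) = ⊤ := by
      intro x; rw [hbot x]; simp [ePos]
    rw [phiNeg]
    simp only [this]
    simp [lintegral_const, measure_univ]
  · push_neg at hbot
    obtain ⟨w₀, hw₀⟩ := hbot
    rcases EReal.bot_or_real (φ w₀) (hφ.2.2.1 w₀) with h | ⟨v₀, hv⟩
    · exact absurd h hw₀
    obtain ⟨ρ, K, hρ, hdecay⟩ := decay_bound hφ hv
    -- show ∫ ofReal((‖x‖-K)/ρ) = ⊤
    have hpoint : ∀ x : EuclideanSpace ℝ (Fin d),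
        ENNReal.ofReal ‖x‖ ≤ ENNReal.ofReal ρ * ENNReal.ofReal ((‖x‖ - K) / ρ) + ENNReal.ofReal |K| := by
      intro x
      rcases le_or_gt K ‖x‖ with h | h
      · calc ENNReal.ofReal ‖x‖ = ENNReal.ofReal (ρ * ((‖x‖ - K) / ρ) + K) := by
              rw [mul_div_cancel₀ _ hρ.ne']; ring_nf
            _ ≤ ENNReal.ofReal (ρ * ((‖x‖ - K) / ρ)) + ENNReal.ofReal K :=
              ENNReal.ofReal_add_le
            _ ≤ ENNReal.ofReal ρ * ENNReal.ofReal ((‖x‖ - K) / ρ) + ENNReal.ofReal |K| := by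
              rw [ENNReal.ofReal_mul hρ.le]
              gcongr
              exact le_abs_self K
      · calc ENNReal.ofReal ‖x‖ ≤ ENNReal.ofReal |K| := by
              apply ENNReal.ofReal_le_ofReal
              exact le_trans h.le (le_abs_self K)
            _ ≤ _ := le_add_self
    have hG : (∫⁻ x, ENNReal.ofReal ((‖x‖ - K) / ρ) ∂P) = ⊤ := by
      by_contra hG
      have hle : (∫⁻ x, ENNReal.ofReal ‖x‖ ∂P) ≤
          ENNReal.ofReal ρ * (∫⁻ x, ENNReal.ofReal ((‖x‖ - K) / ρ) ∂P) + ENNReal.ofReal |K| := by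
        calc (∫⁻ x, ENNReal.ofReal ‖x‖ ∂P)
            ≤ ∫⁻ x, ENNReal.ofReal ρ * ENNReal.ofReal ((‖x‖ - K) / ρ) + ENNReal.ofReal |K| ∂P :=
              lintegral_mono hpoint
          _ = ∫⁻ x, ENNReal.ofReal ρ * ENNReal.ofReal ((‖x‖ - K) / ρ) ∂P + ENNReal.ofReal |K| * P Set.univ := by
              rw [lintegral_add_right _ measurable_const, lintegral_const]
          _ = ENNReal.ofReal ρ * (∫⁻ x, ENNReal.ofReal ((‖x‖ - K) / ρ) ∂P) + ENNReal.ofReal |K| := by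
              rw [lintegral_const_mul' _ _ ENNReal.ofReal_ne_top, measure_univ, mul_one]
      rw [hP] at hle
      have : ENNReal.ofReal ρ * (∫⁻ x, ENNReal.ofReal ((‖x‖ - K) / ρ) ∂P) + ENNReal.ofReal |K| ≠ ⊤ := by
        apply ENNReal.add_ne_top.2
        exact ⟨ENNReal.mul_ne_top ENNReal.ofReal_ne_top hG, ENNReal.ofReal_ne_top⟩
      exact this (top_le_iff.1 hle)
    rw [phiNeg, eq_top_iff, ← hG]
    exact lintegral_mono fun x => hdecay x

lemma partA {φ : EuclideanSpace ℝ (Fin d) → EReal} (hφ : PhiClass φ)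
    (P : MeasureTheory.Measure (EuclideanSpace ℝ (Fin d))) [IsProbabilityMeasure P]
    (hP : (∫⁻ x, ENNReal.ofReal ‖x‖ ∂P) = ⊤) : LPhi φ P = ⊥ := by
  rw [LPhi, phiNeg_top hφ P hP, EReal.coe_ennreal_top, EReal.sub_top, EReal.bot_sub, EReal.bot_add]

lemma hyperplane_null (u : EuclideanSpace ℝ (Fin d)) (hu : ‖u‖ = 1) (c : ℝ) :
    volume {x : EuclideanSpace ℝ (Fin d) | (inner ℝ u x : ℝ) = c} = 0 := by
  set s : AffineSubspace ℝ (EuclideanSpace ℝ (Fin d)) :=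
    AffineSubspace.mk' (c • u) (LinearMap.ker ((innerSL ℝ u : EuclideanSpace ℝ (Fin d) →L[ℝ] ℝ) : EuclideanSpace ℝ (Fin d) →ₗ[ℝ] ℝ)) with hs
  have huu : (inner ℝ u u : ℝ) = 1 := by
    rw [real_inner_self_eq_norm_sq, hu]; norm_num
  have hset : {x : EuclideanSpace ℝ (Fin d) | (inner ℝ u x : ℝ) = c} = (s : Set _) := by
    ext x
    simp only [mem_setOf_eq, hs, SetLike.mem_coe, AffineSubspace.mem_mk',
      LinearMap.mem_ker, ContinuousLinearMap.coe_coe, vsub_eq_sub]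
    rw [innerSL_apply_apply, inner_sub_right, real_inner_smul_right, huu]
    constructor
    · intro h; rw [h]; ring
    · intro h; linarith
  rw [hset]
  apply Measure.addHaar_affineSubspace
  intro htop
  have hdir := AffineSubspace.direction_mk' (c • u) (LinearMap.ker ((innerSL ℝ u : EuclideanSpace ℝ (Fin d) →L[ℝ] ℝ) : EuclideanSpace ℝ (Fin d) →ₗ[ℝ] ℝ))
  have hker : LinearMap.ker ((innerSL ℝ u : EuclideanSpace ℝ (Fin d) →L[ℝ] ℝ) : EuclideanSpace ℝ (Fin d) →ₗ[ℝ] ℝ) = ⊤ := by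
    rw [← hdir, ← hs, htop, AffineSubspace.direction_top]
  have : u ∈ LinearMap.ker ((innerSL ℝ u : EuclideanSpace ℝ (Fin d) →L[ℝ] ℝ) : EuclideanSpace ℝ (Fin d) →ₗ[ℝ] ℝ) := by rw [hker]; trivial
  rw [LinearMap.mem_ker, ContinuousLinearMap.coe_coe, innerSL_apply_apply, huu] at this
  norm_num at this

lemma integrable_exp_neg_norm' (A : ℝ) :
    Integrable (fun x : EuclideanSpace ℝ (Fin d) => Real.exp (A - ‖x‖)) := by
  have hint : Integrable (fun x : EuclideanSpace ℝ (Fin d) =>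
      (Real.exp (A + 1) * ((d + 1).factorial : ℝ)) * (1 + ‖x‖) ^ (-(d + 1 : ℝ))) := by
    apply Integrable.const_mul
    apply integrable_one_add_norm (r := (d + 1 : ℝ))
    rw [finrank_euclideanSpace_fin]
    norm_num
  apply hint.mono'
  · apply Continuous.aestronglyMeasurable
    continuity
  · refine Filter.Eventually.of_forall fun x => ?_
    have h0 : (0:ℝ) < 1 + ‖x‖ := by positivity
    have h1 : (1 + ‖x‖) ^ (d + 1) / ((d + 1).factorial : ℝ) ≤ Real.exp (1 + ‖x‖) :=
      Real.pow_div_factorial_le_exp _ h0.le _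
    have h2 : (1 + ‖x‖) ^ (-(d + 1 : ℝ)) = ((1 + ‖x‖) ^ (d + 1))⁻¹ := by
      rw [← Real.rpow_natCast (1 + ‖x‖) (d + 1), ← Real.rpow_neg h0.le]
      norm_num
    rw [Real.norm_eq_abs, abs_of_pos (Real.exp_pos _), h2]
    rw [div_le_iff₀ (by positivity : (0:ℝ) < ((d + 1).factorial : ℝ))] at h1
    have h3 : Real.exp (A - ‖x‖) * (1 + ‖x‖) ^ (d + 1) ≤ Real.exp (A + 1) * ((d + 1).factorial : ℝ) := by
      calc Real.exp (A - ‖x‖) * (1 + ‖x‖) ^ (d + 1)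
          ≤ Real.exp (A - ‖x‖) * (Real.exp (1 + ‖x‖) * ((d + 1).factorial : ℝ)) := by
            apply mul_le_mul_of_nonneg_left h1 (Real.exp_pos _).le
        _ = Real.exp (A + 1) * ((d + 1).factorial : ℝ) := by
            rw [← mul_assoc, ← Real.exp_add]; ring_nf
    rw [← div_eq_mul_inv, le_div_iff₀ (pow_pos h0 _)]
    exact h3



section PartB

variable (u : EuclideanSpace ℝ (Fin d)) (c A k : ℝ)

def gfun (x : EuclideanSpace ℝ (Fin d)) : ℝ := A - ‖x‖ - k * |(inner ℝ u x : ℝ) - c|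

lemma gfun_cont : Continuous (gfun u c A k) := by
  unfold gfun
  have h1 : Continuous fun x : EuclideanSpace ℝ (Fin d) => (inner ℝ u x : ℝ) :=
    Continuous.inner continuous_const continuous_id
  continuity

lemma gfun_le (x : EuclideanSpace ℝ (Fin d)) (hk : 0 ≤ k) : gfun u c A k x ≤ A - ‖x‖ := by
  unfold gfun
  have : 0 ≤ k * |(inner ℝ u x : ℝ) - c| := mul_nonneg hk (abs_nonneg _)
  linarith

lemma gfun_le' (x : EuclideanSpace ℝ (Fin d)) (hk : 0 ≤ k) : gfun u c A k x ≤ A := by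
  have := gfun_le u c A k x hk
  linarith [norm_nonneg x]

lemma gfun_concave (hk : 0 ≤ k) (x y : EuclideanSpace ℝ (Fin d)) (a b : ℝ)
    (ha : 0 ≤ a) (hb : 0 ≤ b) (hab : a + b = 1) :
    a * gfun u c A k x + b * gfun u c A k y ≤ gfun u c A k (a • x + b • y) := by
  have hnorm : ‖a • x + b • y‖ ≤ a * ‖x‖ + b * ‖y‖ := by
    calc ‖a • x + b • y‖ ≤ ‖a • x‖ + ‖b • y‖ := norm_add_le _ _
      _ = a * ‖x‖ + b * ‖y‖ := by
        rw [norm_smul, norm_smul, Real.norm_eq_abs, Real.norm_eq_abs,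
          abs_of_nonneg ha, abs_of_nonneg hb]
  have hinner : (inner ℝ u (a • x + b • y) : ℝ) = a * (inner ℝ u x : ℝ) + b * (inner ℝ u y : ℝ) := by
    rw [inner_add_right, real_inner_smul_right, real_inner_smul_right]
  have habs : |(inner ℝ u (a • x + b • y) : ℝ) - c|
      ≤ a * |(inner ℝ u x : ℝ) - c| + b * |(inner ℝ u y : ℝ) - c| := by
    rw [hinner]
    have h1 : a * (inner ℝ u x : ℝ) + b * (inner ℝ u y : ℝ) - c
        = a * ((inner ℝ u x : ℝ) - c) + b * ((inner ℝ u y : ℝ) - c) := by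
      linear_combination c * hab
    calc |a * (inner ℝ u x : ℝ) + b * (inner ℝ u y : ℝ) - c|
        = |a * ((inner ℝ u x : ℝ) - c) + b * ((inner ℝ u y : ℝ) - c)| := by rw [h1]
      _ ≤ |a * ((inner ℝ u x : ℝ) - c)| + |b * ((inner ℝ u y : ℝ) - c)| := abs_add_le _ _
      _ = a * |(inner ℝ u x : ℝ) - c| + b * |(inner ℝ u y : ℝ) - c| := by
          rw [abs_mul, abs_mul, abs_of_nonneg ha, abs_of_nonneg hb]
  have hmul : k * |(inner ℝ u (a • x + b • y) : ℝ) - c|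
      ≤ k * (a * |(inner ℝ u x : ℝ) - c| + b * |(inner ℝ u y : ℝ) - c|) :=
    mul_le_mul_of_nonneg_left habs hk
  have hA : a * A + b * A = A := by linear_combination A * hab
  unfold gfun
  nlinarith [hmul, hnorm, hA]

lemma gfun_phiClass (hk : 0 ≤ k) :
    PhiClass (fun x => ((gfun u c A k x : ℝ) : EReal)) := by
  refine ⟨?_, ?_, ?_, ?_⟩
  · exact (continuous_coe_real_ereal.comp (gfun_cont u c A k)).upperSemicontinuous
  · intro x y a b ha hb hab
    rw [← EReal.coe_mul, ← EReal.coe_mul, ← EReal.coe_add, EReal.coe_le_coe_iff]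
    exact gfun_concave u c A k hk x y a b ha hb hab
  · exact fun x => EReal.coe_ne_top _
  · rw [EReal.tendsto_nhds_bot_iff_real]
    intro r
    filter_upwards [tendsto_norm_cocompact_atTop.eventually_gt_atTop (A - r)] with x hx
    rw [EReal.coe_lt_coe_iff]
    have := gfun_le u c A k x hk
    linarith

lemma exp_integral_tendsto (hu : ‖u‖ = 1) :
    Tendsto (fun k : ℕ => ∫⁻ x, ENNReal.ofReal (Real.exp (gfun u c A k x)))
      atTop (𝓝 0) := by
  have h0 : (0 : ℝ≥0∞) = ∫⁻ _x : EuclideanSpace ℝ (Fin d), (0:ℝ≥0∞) := by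
    rw [lintegral_zero]
  rw [h0]
  apply tendsto_lintegral_of_dominated_convergence
    (bound := fun x => ENNReal.ofReal (Real.exp (A - ‖x‖)))
  · intro n
    exact ENNReal.measurable_ofReal.comp
      (Real.continuous_exp.comp (gfun_cont u c A n)).measurable
  · intro n
    refine Filter.Eventually.of_forall fun x => ?_
    exact ENNReal.ofReal_le_ofReal (Real.exp_le_exp.2 (gfun_le u c A n x (by positivity)))
  · have hfin := (integrable_exp_neg_norm' (d := d) A).hasFiniteIntegral
    rw [hasFiniteIntegral_iff_ofReal
      (Filter.Eventually.of_forall fun x => (Real.exp_pos _).le)] at hfin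
    exact hfin.ne
  · have hnull := hyperplane_null u hu c
    rw [← compl_compl {x : EuclideanSpace ℝ (Fin d) | (inner ℝ u x : ℝ) = c}] at hnull
    have hae : ∀ᵐ x : EuclideanSpace ℝ (Fin d), (inner ℝ u x : ℝ) ≠ c := by
      rw [ae_iff]
      simpa using hyperplane_null u hu c
    filter_upwards [hae] with x hx
    have hδ : 0 < |(inner ℝ u x : ℝ) - c| := abs_pos.2 (sub_ne_zero.2 hx)
    have h1 : Tendsto (fun k : ℕ => gfun u c A k x) atTop atBot := by
      unfold gfun
      apply Filter.tendsto_atBot_add_const_left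
      apply Filter.tendsto_neg_atTop_atBot.comp
      exact Filter.Tendsto.atTop_mul_const hδ tendsto_natCast_atTop_atTop
    have h2 := Real.tendsto_exp_atBot.comp h1
    have h3 := ENNReal.tendsto_ofReal h2
    simpa using h3

end PartB

lemma partB (P : Measure (EuclideanSpace ℝ (Fin d))) [IsProbabilityMeasure P]
    (hm : (∫⁻ x, ENNReal.ofReal ‖x‖ ∂P) ≠ ⊤)
    (u : EuclideanSpace ℝ (Fin d)) (c : ℝ) (hu : ‖u‖ = 1)
    (hP1 : P {x | (inner ℝ u x : ℝ) = c} = 1) (M : ℝ) :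
    ∃ φ : EuclideanSpace ℝ (Fin d) → EReal, PhiClass φ ∧
      (phiPos φ P ≠ ⊤ ∨ phiNeg φ P ≠ ⊤) ∧ (M : EReal) < LPhi φ P := by
  set m : ℝ := (∫⁻ x, ENNReal.ofReal ‖x‖ ∂P).toReal with hmdef
  have hm0 : 0 ≤ m := ENNReal.toReal_nonneg
  set A : ℝ := |M| + 2 * m + 1 with hAdef
  have hA0 : 0 < A := by positivity
  have hmA : m ≤ A := by
    have := abs_nonneg M
    linarith
  -- choose k
  obtain ⟨k, hk⟩ : ∃ k : ℕ,
      (∫⁻ x, ENNReal.ofReal (Real.exp (gfun u c A k x))) ≤ 1 := by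
    have h := (exp_integral_tendsto u c A hu).eventually_lt_const
      (zero_lt_one (α := ℝ≥0∞))
    exact (h.mono fun k hk => hk.le).exists
  set φ : EuclideanSpace ℝ (Fin d) → EReal :=
    fun x => ((gfun u c A (k : ℝ) x : ℝ) : EReal) with hφdef
  have hkR : (0:ℝ) ≤ (k:ℝ) := Nat.cast_nonneg k
  -- a.e. statement
  have hcont : Continuous fun x : EuclideanSpace ℝ (Fin d) => (inner ℝ u x : ℝ) :=
    Continuous.inner continuous_const continuous_id
  have hms : MeasurableSet {x : EuclideanSpace ℝ (Fin d) | (inner ℝ u x : ℝ) = c} :=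
    (isClosed_singleton.preimage hcont).measurableSet
  have hae : ∀ᵐ x ∂P, (inner ℝ u x : ℝ) = c := by
    rw [ae_iff]
    have : {x : EuclideanSpace ℝ (Fin d) | ¬ (inner ℝ u x : ℝ) = c}
        = {x : EuclideanSpace ℝ (Fin d) | (inner ℝ u x : ℝ) = c}ᶜ := rfl
    rw [this, measure_compl hms (measure_ne_top P _), hP1, measure_univ, tsub_self]
  -- pointwise rewrites
  have hPosPt : ∀ x, ePos (φ x) = ENNReal.ofReal (gfun u c A (k:ℝ) x) :=
    fun x => ePos_coe _
  have hNegPt : ∀ x, ePos (-(φ x)) = ENNReal.ofReal (-(gfun u c A (k:ℝ) x)) :=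
    fun x => ePos_neg_coe _
  have hgae : ∀ᵐ x ∂P, gfun u c A (k:ℝ) x = A - ‖x‖ := by
    filter_upwards [hae] with x hx
    unfold gfun
    rw [hx]
    simp
  -- phiNeg bound
  have hq : phiNeg φ P ≤ ∫⁻ x, ENNReal.ofReal ‖x‖ ∂P := by
    rw [phiNeg, lintegral_congr hNegPt]
    apply lintegral_mono_ae
    filter_upwards [hgae] with x hx
    rw [hx]
    apply ENNReal.ofReal_le_ofReal
    linarith [hA0]
  have hqne : phiNeg φ P ≠ ⊤ := fun h => hm (top_le_iff.1 (h ▸ hq))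
  -- phiPos bounds
  have hp_up : phiPos φ P ≤ ENNReal.ofReal A := by
    rw [phiPos, lintegral_congr hPosPt]
    calc (∫⁻ x, ENNReal.ofReal (gfun u c A (k:ℝ) x) ∂P)
        ≤ ∫⁻ _x, ENNReal.ofReal A ∂P :=
          lintegral_mono fun x => ENNReal.ofReal_le_ofReal (gfun_le' u c A _ x hkR)
      _ = ENNReal.ofReal A := by rw [lintegral_const, measure_univ, mul_one]
  have hpne : phiPos φ P ≠ ⊤ :=
    fun h => ENNReal.ofReal_ne_top (top_le_iff.1 (h ▸ hp_up))
  have hmeasnorm : Measurable fun x : EuclideanSpace ℝ (Fin d) => ENNReal.ofReal ‖x‖ :=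
    ENNReal.measurable_ofReal.comp continuous_norm.measurable
  have hp_low : ENNReal.ofReal A - (∫⁻ x, ENNReal.ofReal ‖x‖ ∂P) ≤ phiPos φ P := by
    rw [tsub_le_iff_right]
    calc ENNReal.ofReal A = ∫⁻ _x, ENNReal.ofReal A ∂P := by
          rw [lintegral_const, measure_univ, mul_one]
      _ ≤ ∫⁻ x, (ePos (φ x) + ENNReal.ofReal ‖x‖) ∂P := by
          apply lintegral_mono_ae
          filter_upwards [hgae] with x hx
          rw [hPosPt, hx]
          calc ENNReal.ofReal A = ENNReal.ofReal ((A - ‖x‖) + ‖x‖) := by ring_nf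
            _ ≤ ENNReal.ofReal (A - ‖x‖) + ENNReal.ofReal ‖x‖ := ENNReal.ofReal_add_le
      _ = phiPos φ P + ∫⁻ x, ENNReal.ofReal ‖x‖ ∂P := by
          rw [lintegral_add_right _ hmeasnorm, phiPos]
  -- exp integral
  have hE : (∫⁻ x, EReal.exp (φ x)) ≤ 1 := by
    have : ∀ x : EuclideanSpace ℝ (Fin d),
        EReal.exp (φ x) = ENNReal.ofReal (Real.exp (gfun u c A (k:ℝ) x)) :=
      fun x => EReal.exp_coe _
    rw [lintegral_congr this]
    exact hk
  have hEne : (∫⁻ x, EReal.exp (φ x)) ≠ ⊤ :=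
    ne_top_of_le_ne_top ENNReal.one_ne_top hE
  refine ⟨φ, gfun_phiClass u c A (k:ℝ) hkR, Or.inl hpne, ?_⟩
  -- real conversions
  set p := phiPos φ P
  set q := phiNeg φ P
  set E := (∫⁻ x, EReal.exp (φ x))
  have hprl : A - m ≤ p.toReal := by
    have h1 : (∫⁻ x, ENNReal.ofReal ‖x‖ ∂P) ≤ ENNReal.ofReal A := by
      rw [← ENNReal.ofReal_toReal hm]
      exact ENNReal.ofReal_le_ofReal hmA
    have h2 := ENNReal.toReal_mono hpne hp_low
    rwa [ENNReal.toReal_sub_of_le h1 ENNReal.ofReal_ne_top,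
      ENNReal.toReal_ofReal hA0.le, ← hmdef] at h2
  have hqrl : q.toReal ≤ m := ENNReal.toReal_mono hm hq
  have hErl : E.toReal ≤ 1 := by
    have := ENNReal.toReal_mono (ENNReal.one_ne_top) hE
    simpa using this
  rw [LPhi, EReal.coe_ennreal_eq p hpne, EReal.coe_ennreal_eq q hqne,
    EReal.coe_ennreal_eq E hEne, ← EReal.coe_sub, ← EReal.coe_sub,
    ← EReal.coe_one, ← EReal.coe_add, EReal.coe_lt_coe_iff]
  have := le_abs_self M
  linarith

theorem stmt10 (d : ℕ) (P : Measure (EuclideanSpace ℝ (Fin d)))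
    [IsProbabilityMeasure P] :
    ((∫⁻ x, ENNReal.ofReal ‖x‖ ∂P) = ⊤ →
      ∀ φ : EuclideanSpace ℝ (Fin d) → EReal, PhiClass φ →
        (phiPos φ P ≠ ⊤ ∨ phiNeg φ P ≠ ⊤) → LPhi φ P = ⊥) ∧
    ((∫⁻ x, ENNReal.ofReal ‖x‖ ∂P) ≠ ⊤ →
      (∃ (u : EuclideanSpace ℝ (Fin d)) (c : ℝ), ‖u‖ = 1 ∧
        P {x | (inner ℝ u x : ℝ) = c} = 1) →
      ∀ M : ℝ, ∃ φ : EuclideanSpace ℝ (Fin d) → EReal, PhiClass φ ∧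
        (phiPos φ P ≠ ⊤ ∨ phiNeg φ P ≠ ⊤) ∧ (M : EReal) < LPhi φ P) := by
  constructor
  · intro hP φ hφ _h
    exact partA hφ P hP
  · rintro hm ⟨u, c, hu, hP1⟩ M
    exact partB P hm u c hu hP1 M

end
end
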